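/- For n ≥ 2 and m ≥ 1: Φ(n^m) = n^{m−1}·Φ(n) if n ≢ 2 (mod 4), and Φ(n^m) = 2·n^{m−1}·Φ(n) if n ≡ 2 (mod 4) and m ≥ 2. -/

import Mathlib

/-!
Identify `gPhi n` with the order of the group `C(ℤ/n)` of norm-one elements of `(ℤ/n)[i]`, i.e. of
the points of `x² + y² = 1` under `(x, y) * (x', y') = (xx' - yy', xy' + yx')`. The Chinese remainder
theorem makes `gPhi` multiplicative, so it suffices to understand the reduction
`C(ℤ/n^(j+1)) → C(ℤ/n^j)` for `j ≥ 1`; the kernel `n^j ℤ/n^(j+1)` of `ℤ/n^(j+1) → ℤ/n^j`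
squares to zero.
For odd `n`, `2` is invertible: a Newton step shows that reduction is onto, and its kernel
`{(1, t)}` has order `n`. For `n = 2` the kernel `{(1 + u, v)}` has order `4`, and the image has
index `2`: a point lifts iff the norm of an arbitrary lift is `1`, and multiplying by
`(1 + 2^m, 2^m)` flips this. Hence `gPhi (n^(j+1)) = n · gPhi (n^j)` for odd `n`, and
`gPhi (2^k) = 2^(k+1)` for `k ≥ 2`.
-/

/-- `gPhi n` is the number of norm-one elements of `ℤ[i]/nℤ[i]`. -/
noncomputable def gPhi (n : ℕ) : ℕ :=
  Nat.card {x : ZMod n × ZMod n // x.1 ^ 2 + x.2 ^ 2 = 1}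

open Function

lemma MonoidHom.card_ker_mul_card_range {G H : Type*} [Group G] [Group H] (f : G →* H) :
    Nat.card f.ker * Nat.card f.range = Nat.card G := by
  rw [← Subgroup.index_ker f, f.ker.card_mul_index]

lemma RingHom.card_ker_mul_card {R S : Type*} [Ring R] [Ring S] {f : R →+* S}
    (hf : Surjective f) : Nat.card (RingHom.ker f) * Nat.card S = Nat.card R := by
  rw [← f.toAddMonoidHom.ker.card_mul_index, AddSubgroup.index_ker, AddMonoidHom.range_eq_top.2 hf,
    AddSubgroup.card_top]
  rfl

abbrev UnitCircle (R : Type*) [CommRing R] : Type _ := {p : R × R // p.1 ^ 2 + p.2 ^ 2 = 1}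

namespace UnitCircle

variable {R S : Type*} [CommRing R] [CommRing S]

@[ext] lemma ext {p q : UnitCircle R} (h₁ : p.1.1 = q.1.1) (h₂ : p.1.2 = q.1.2) : p = q :=
  Subtype.ext (Prod.ext h₁ h₂)

instance : One (UnitCircle R) := ⟨⟨(1, 0), by ring⟩⟩

instance : Mul (UnitCircle R) where
  mul p q := ⟨(p.1.1 * q.1.1 - p.1.2 * q.1.2, p.1.1 * q.1.2 + p.1.2 * q.1.1), by
    linear_combination (q.1.1 ^ 2 + q.1.2 ^ 2) * p.2 + q.2⟩

instance : Inv (UnitCircle R) := ⟨fun p ↦ ⟨(p.1.1, -p.1.2), by linear_combination p.2⟩⟩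

@[simp] lemma one_fst : (1 : UnitCircle R).1.1 = 1 := rfl
@[simp] lemma one_snd : (1 : UnitCircle R).1.2 = 0 := rfl
@[simp] lemma mul_fst (p q : UnitCircle R) : (p * q).1.1 = p.1.1 * q.1.1 - p.1.2 * q.1.2 := rfl
@[simp] lemma mul_snd (p q : UnitCircle R) : (p * q).1.2 = p.1.1 * q.1.2 + p.1.2 * q.1.1 := rfl
@[simp] lemma inv_fst (p : UnitCircle R) : p⁻¹.1.1 = p.1.1 := rfl
@[simp] lemma inv_snd (p : UnitCircle R) : p⁻¹.1.2 = -p.1.2 := rfl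

instance : CommGroup (UnitCircle R) where
  mul_assoc _ _ _ := by ext <;> simp <;> ring
  one_mul _ := by ext <;> simp
  mul_one _ := by ext <;> simp
  inv_mul_cancel p := by
    ext
    · simpa [sq] using p.2
    · simp [mul_comm]
  mul_comm _ _ := by ext <;> simp <;> ring

def map (f : R →+* S) : UnitCircle R →* UnitCircle S where
  toFun p := ⟨(f p.1.1, f p.1.2), by rw [← map_pow, ← map_pow, ← map_add, p.2, map_one]⟩
  map_one' := by ext <;> simp
  map_mul' p q := by ext <;> simp

@[simp] lemma map_fst (f : R →+* S) (p : UnitCircle R) : (map f p).1.1 = f p.1.1 := rfl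
@[simp] lemma map_snd (f : R →+* S) (p : UnitCircle R) : (map f p).1.2 = f p.1.2 := rfl

def congr (e : R ≃+* S) : UnitCircle R ≃* UnitCircle S :=
  { map e.toRingHom with
    invFun := map e.symm.toRingHom
    left_inv p := by ext <;> simp
    right_inv p := by ext <;> simp }

def prodEquiv : UnitCircle (R × S) ≃* UnitCircle R × UnitCircle S :=
  { (map (RingHom.fst R S)).prod (map (RingHom.snd R S)) with
    invFun pq := ⟨((pq.1.1.1, pq.2.1.1), (pq.1.1.2, pq.2.1.2)), Prod.ext pq.1.2 pq.2.2⟩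
    left_inv _ := rfl
    right_inv _ := rfl }

section SquareZeroKernel

variable {f : R →+* S}

lemma mem_ker_map {p : UnitCircle R} :
    p ∈ (map f).ker ↔ p.1.1 - 1 ∈ RingHom.ker f ∧ p.1.2 ∈ RingHom.ker f := by
  simp [UnitCircle.ext_iff, sub_eq_zero]

lemma card_ker_map_of_isUnit_two (hK : ∀ a ∈ RingHom.ker f, ∀ b ∈ RingHom.ker f, a * b = 0)
    (h2 : IsUnit (2 : R)) :
    Nat.card (map f).ker = Nat.card (RingHom.ker f) := by
  refine Nat.card_congr
    { toFun p := ⟨p.1.1.2, (mem_ker_map.1 p.2).2⟩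
      invFun v := ⟨⟨(1, v), by linear_combination hK v v.2 v v.2⟩, mem_ker_map.2 ⟨by simp, v.2⟩⟩
      left_inv := ?_
      right_inv _ := rfl }
  rintro ⟨p, hp⟩
  obtain ⟨hu, hv⟩ := mem_ker_map.1 hp
  have h2u : 2 * (p.1.1 - 1) = 2 * 0 := by
    linear_combination p.2 - hK _ hu _ hu - hK _ hv _ hv
  exact Subtype.ext (UnitCircle.ext (sub_eq_zero.1 (h2.mul_left_cancel h2u)).symm rfl)

lemma card_ker_map_of_two_mul_eq_zero
    (hK : ∀ a ∈ RingHom.ker f, ∀ b ∈ RingHom.ker f, a * b = 0)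
    (h2K : ∀ a ∈ RingHom.ker f, 2 * a = 0) :
    Nat.card (map f).ker = Nat.card (RingHom.ker f) ^ 2 := by
  rw [sq, ← Nat.card_prod]
  refine Nat.card_congr
    { toFun p := (⟨p.1.1.1 - 1, (mem_ker_map.1 p.2).1⟩, ⟨p.1.1.2, (mem_ker_map.1 p.2).2⟩)
      invFun uv := ⟨⟨(1 + uv.1, uv.2), by
          linear_combination h2K _ uv.1.2 + hK _ uv.1.2 _ uv.1.2 + hK _ uv.2.2 _ uv.2.2⟩,
        mem_ker_map.2 ⟨by simp [uv.1.2], uv.2.2⟩⟩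
      left_inv p := by ext <;> simp
      right_inv uv := by ext <;> simp }

lemma map_surjective (hf : Surjective f)
    (hK : ∀ a ∈ RingHom.ker f, ∀ b ∈ RingHom.ker f, a * b = 0) (h2 : IsUnit (2 : R)) :
    Surjective (map f) := by
  rintro ⟨⟨a, b⟩, hab⟩
  obtain ⟨x, rfl⟩ := hf a
  obtain ⟨y, rfl⟩ := hf b
  have he : x ^ 2 + y ^ 2 - 1 ∈ RingHom.ker f := by simpa [sub_eq_zero] using hab
  obtain ⟨c, hc⟩ := h2.exists_right_inv
  -- Newton step: rescaling by `1 - e / 2` removes the defect `e` of the norm, as `e² = 0`.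
  refine ⟨⟨((1 - c * (x ^ 2 + y ^ 2 - 1)) * x, (1 - c * (x ^ 2 + y ^ 2 - 1)) * y), ?_⟩, ?_⟩
  · linear_combination (-(x ^ 2 + y ^ 2 - 1)) * hc
      + (c ^ 2 - 2 * c + c ^ 2 * (x ^ 2 + y ^ 2 - 1)) * hK _ he _ he
  · ext <;> simp_all

lemma mem_range_map_iff (hK : ∀ a ∈ RingHom.ker f, ∀ b ∈ RingHom.ker f, a * b = 0)
    (h2K : ∀ a ∈ RingHom.ker f, 2 * a = 0) {p : UnitCircle S} {x y : R}
    (hx : f x = p.1.1) (hy : f y = p.1.2) : p ∈ (map f).range ↔ x ^ 2 + y ^ 2 = 1 := by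
  refine ⟨?_, fun hxy ↦ ⟨⟨(x, y), hxy⟩, UnitCircle.ext hx hy⟩⟩
  rintro ⟨q, rfl⟩
  have hu : x - q.1.1 ∈ RingHom.ker f := by simp_all
  have hv : y - q.1.2 ∈ RingHom.ker f := by simp_all
  linear_combination q.2 + q.1.1 * h2K _ hu + q.1.2 * h2K _ hv + hK _ hu _ hu + hK _ hv _ hv

end SquareZeroKernel

end UnitCircle

namespace ZMod

abbrev castHomPowSucc (n j : ℕ) : ZMod (n ^ (j + 1)) →+* ZMod (n ^ j) :=
  castHom (pow_dvd_pow n j.le_succ) _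

lemma natCast_pow_eq_zero (n k : ℕ) : (n : ZMod (n ^ k)) ^ k = 0 := by
  exact_mod_cast natCast_self (n ^ k)

lemma exists_eq_pow_mul_of_castHomPowSucc_eq_zero {n j : ℕ} {a : ZMod (n ^ (j + 1))}
    (ha : castHomPowSucc n j a = 0) : ∃ k : ℤ, a = (n : ZMod (n ^ (j + 1))) ^ j * k := by
  obtain ⟨k, rfl⟩ := intCast_surjective a
  rw [map_intCast, intCast_zmod_eq_zero_iff_dvd] at ha
  obtain ⟨l, rfl⟩ := ha
  exact ⟨l, by push_cast; ring⟩

lemma mul_eq_zero_of_mem_ker_castHomPowSucc {n j : ℕ} (hj : 1 ≤ j) :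
    ∀ a ∈ RingHom.ker (castHomPowSucc n j), ∀ b ∈ RingHom.ker (castHomPowSucc n j),
      a * b = 0 := by
  intro a ha b hb
  obtain ⟨k, rfl⟩ := exists_eq_pow_mul_of_castHomPowSucc_eq_zero ha
  obtain ⟨l, rfl⟩ := exists_eq_pow_mul_of_castHomPowSucc_eq_zero hb
  obtain ⟨i, rfl⟩ := Nat.exists_eq_add_of_le hj
  linear_combination ((n : ZMod (n ^ (1 + i + 1))) ^ i * k * l) * natCast_pow_eq_zero n (1 + i + 1)

lemma two_mul_eq_zero_of_mem_ker_castHomPowSucc (j : ℕ) :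
    ∀ a ∈ RingHom.ker (castHomPowSucc 2 j), 2 * a = 0 := by
  intro a ha
  obtain ⟨k, rfl⟩ := exists_eq_pow_mul_of_castHomPowSucc_eq_zero ha
  linear_combination (k : ZMod (2 ^ (j + 1))) * natCast_pow_eq_zero 2 (j + 1)

lemma card_ker_castHomPowSucc {n : ℕ} (hn : n ≠ 0) (j : ℕ) :
    Nat.card (RingHom.ker (castHomPowSucc n j)) = n := by
  have h := RingHom.card_ker_mul_card (f := castHomPowSucc n j) (castHom_surjective _)
  rw [Nat.card_zmod, Nat.card_zmod] at h
  exact Nat.eq_of_mul_eq_mul_right (by positivity) (h.trans (pow_succ' n j))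

lemma two_pow_mul_intCast_eq_zero_iff (m : ℕ) (k : ℤ) :
    (2 : ZMod (2 ^ (m + 2))) ^ (m + 1) * k = 0 ↔ 2 ∣ k := by
  have h := intCast_zmod_eq_zero_iff_dvd (2 ^ (m + 1) * k) (2 ^ (m + 2))
  push_cast [pow_succ 2 (m + 1)] at h
  rw [h, mul_dvd_mul_iff_left (by positivity)]

end ZMod

lemma gPhi_pow_succ_of_odd {n j : ℕ} (hn : Odd n) (hj : 1 ≤ j) :
    gPhi (n ^ (j + 1)) = n * gPhi (n ^ j) := by
  have hK := ZMod.mul_eq_zero_of_mem_ker_castHomPowSucc (n := n) hj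
  have h2 : IsUnit (2 : ZMod (n ^ (j + 1))) := by
    simpa using (ZMod.isUnit_iff_coprime 2 _).2 ((Nat.coprime_two_left.2 hn).pow_right (j + 1))
  have h := (UnitCircle.map (ZMod.castHomPowSucc n j)).card_ker_mul_card_range
  rw [UnitCircle.card_ker_map_of_isUnit_two hK h2, ZMod.card_ker_castHomPowSucc hn.pos.ne',
    MonoidHom.range_eq_top.2 (UnitCircle.map_surjective (ZMod.ringHom_surjective _) hK h2),
    Subgroup.card_top] at h
  exact h.symm

lemma index_range_map_castHomPowSucc_two {m : ℕ} (hm : 1 ≤ m) :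
    (UnitCircle.map (ZMod.castHomPowSucc 2 (m + 1))).range.index = 2 := by
  have hK := ZMod.mul_eq_zero_of_mem_ker_castHomPowSucc (n := 2) (j := m + 1) (by omega)
  have h2K := ZMod.two_mul_eq_zero_of_mem_ker_castHomPowSucc (m + 1)
  have hρ : (1 + 2 ^ m : ZMod (2 ^ (m + 1))) ^ 2 + (2 ^ m) ^ 2 = 1 := by
    linear_combination (1 + 2 ^ m : ZMod (2 ^ (m + 1))) * ZMod.natCast_pow_eq_zero 2 (m + 1)
  rw [Subgroup.index_eq_two_iff]
  refine ⟨⟨(1 + 2 ^ m, 2 ^ m), hρ⟩, fun p ↦ ?_⟩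
  obtain ⟨x, hx⟩ := ZMod.ringHom_surjective (ZMod.castHomPowSucc 2 (m + 1)) p.1.1
  obtain ⟨y, hy⟩ := ZMod.ringHom_surjective (ZMod.castHomPowSucc 2 (m + 1)) p.1.2
  obtain ⟨k, hk⟩ := ZMod.exists_eq_pow_mul_of_castHomPowSucc_eq_zero (a := x ^ 2 + y ^ 2 - 1)
    (by rw [map_sub, map_add, map_pow, map_pow, hx, hy, p.2, map_one, sub_self])
  rw [Nat.cast_ofNat] at hk
  obtain ⟨i, rfl⟩ := Nat.exists_eq_add_of_le hm
  -- The lift `(1 + 2^m, 2^m)` of the rotation has norm `1 + 2^(m+1)` modulo `2^(m+2)`.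
  have hN : (x * (1 + 2 ^ (1 + i)) - y * 2 ^ (1 + i)) ^ 2
        + (x * 2 ^ (1 + i) + y * (1 + 2 ^ (1 + i))) ^ 2
      = 1 + 2 ^ (1 + i + 1) * ((k + 1 : ℤ) : ZMod (2 ^ (1 + i + 2))) := by
    push_cast
    linear_combination (1 + 2 * 2 ^ (1 + i) + 2 * 2 ^ (2 * (1 + i)) : ZMod (2 ^ (1 + i + 2))) * hk
      + ((2 : ZMod (2 ^ (1 + i + 2))) ^ i + 2 ^ (i + 1) * k + 2 ^ (2 * i + 2) * k)
        * ZMod.natCast_pow_eq_zero 2 (1 + i + 2)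
  rw [UnitCircle.mem_range_map_iff hK h2K (x := x * (1 + 2 ^ (1 + i)) - y * 2 ^ (1 + i))
      (y := x * 2 ^ (1 + i) + y * (1 + 2 ^ (1 + i)))
      (by simp only [map_sub, map_mul, map_add, map_pow, map_one, map_ofNat, hx, hy,
        UnitCircle.mul_fst])
      (by simp only [map_mul, map_add, map_pow, map_one, map_ofNat, hx, hy, UnitCircle.mul_snd]),
    UnitCircle.mem_range_map_iff hK h2K hx hy, hN, add_eq_left,
    ZMod.two_pow_mul_intCast_eq_zero_iff, ← sub_eq_zero, hk, ZMod.two_pow_mul_intCast_eq_zero_iff]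
  unfold Xor
  omega

lemma gPhi_two_pow_succ {m : ℕ} (hm : 1 ≤ m) :
    gPhi (2 ^ (m + 2)) = 2 * gPhi (2 ^ (m + 1)) := by
  have hK := ZMod.mul_eq_zero_of_mem_ker_castHomPowSucc (n := 2) (j := m + 1) (by omega)
  have h2K := ZMod.two_mul_eq_zero_of_mem_ker_castHomPowSucc (m + 1)
  have h := (UnitCircle.map (ZMod.castHomPowSucc 2 (m + 1))).card_ker_mul_card_range
  have hr := (UnitCircle.map (ZMod.castHomPowSucc 2 (m + 1))).range.card_mul_index
  rw [UnitCircle.card_ker_map_of_two_mul_eq_zero hK h2K,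
    ZMod.card_ker_castHomPowSucc two_ne_zero] at h
  rw [index_range_map_castHomPowSucc_two hm] at hr
  unfold gPhi
  rw [← h, ← hr]
  ring

lemma gPhi_one : gPhi 1 = 1 := by
  unfold gPhi; rw [Nat.card_eq_fintype_card]; decide

lemma gPhi_two : gPhi 2 = 2 := by
  unfold gPhi; rw [Nat.card_eq_fintype_card]; decide

lemma gPhi_two_pow {k : ℕ} (hk : 2 ≤ k) : gPhi (2 ^ k) = 2 ^ (k + 1) := by
  induction k, hk using Nat.le_induction with
  | base => unfold gPhi; rw [Nat.card_eq_fintype_card]; decide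
  | succ k hk ih =>
    obtain ⟨m, rfl⟩ := Nat.exists_eq_add_of_le' hk
    rw [gPhi_two_pow_succ (by omega), ih, pow_succ _ (m + 2 + 1)]
    ring

lemma gPhi_odd_pow {n : ℕ} (hn : Odd n) (j : ℕ) : gPhi (n ^ (j + 1)) = n ^ j * gPhi n := by
  induction j with
  | zero => simp
  | succ j ih => rw [gPhi_pow_succ_of_odd hn (by omega), ih, pow_succ]; ring

lemma gPhi_mul {a b : ℕ} (h : a.Coprime b) : gPhi (a * b) = gPhi a * gPhi b := by
  unfold gPhi
  rw [← Nat.card_prod]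
  exact Nat.card_congr
    ((UnitCircle.congr (ZMod.chineseRemainder h)).trans UnitCircle.prodEquiv).toEquiv

theorem gPhi_pow (n m : ℕ) (hn : 2 ≤ n) (hm : 1 ≤ m) :
    (n % 4 ≠ 2 → gPhi (n ^ m) = n ^ (m - 1) * gPhi n) ∧
      (n % 4 = 2 → 2 ≤ m → gPhi (n ^ m) = 2 * n ^ (m - 1) * gPhi n) := by
  obtain ⟨e, q, hq, rfl⟩ := Nat.exists_eq_two_pow_mul_odd (n := n) (by omega)
  obtain ⟨m, rfl⟩ := Nat.exists_eq_add_of_le' hm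
  have hq2 := Nat.odd_iff.1 hq
  have hcop : ∀ i j, Nat.Coprime (2 ^ i) (q ^ j) :=
    fun i j ↦ ((Nat.coprime_two_left.2 hq).pow_right j).pow_left i
  have hpow : gPhi ((2 ^ e * q) ^ (m + 1)) = gPhi (2 ^ (e * (m + 1))) * (q ^ m * gPhi q) := by
    rw [mul_pow, ← pow_mul, gPhi_mul (hcop _ _), gPhi_odd_pow hq]
  have hbase : gPhi (2 ^ e * q) = gPhi (2 ^ e) * gPhi q := by
    simpa using gPhi_mul (hcop e 1)
  rw [hpow, hbase, Nat.add_sub_cancel, mul_pow, ← pow_mul]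
  rcases e with _ | _ | e
  · exact ⟨fun _ ↦ by simp [gPhi_one], fun h ↦ by omega⟩
  · refine ⟨fun h ↦ by omega, fun _ hm2 ↦ ?_⟩
    rw [gPhi_two_pow (by omega), zero_add, pow_one, gPhi_two]
    ring
  · refine ⟨fun _ ↦ ?_, fun h ↦ by simp [pow_succ, Nat.mul_mod, Nat.mul_assoc] at h⟩
    rw [gPhi_two_pow (by nlinarith), gPhi_two_pow (by omega)]
    ring
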